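/- Let a ∈ ℝ, T > 0, let f, g ∈ D([0,T],ℝ), let γ : [0,T] → [0,T] be a strictly increasing continuous bijection, and let δ ≥ sup_{t∈[0,T]} |g(γ(t)) − f(t)|. Set A_f(t) = ∫₀^t 1{f(z)>a} dz and A_g(t) = ∫₀^t 1{g(z)>a} dz. Then for every t ∈ [0,T]: |A_g(γ(t)) − A_f(t)| ≤ sup_{s∈[0,T]}|γ(s) − s| + λ( z ∈ [0,T] : g(γ(z)) ≤ a < g(z) or g(z) ≤ a < g(γ(z)) ) + λ( z ∈ [0,T] : |f(z) − a| ≤ δ ), where λ is Lebesgue measure. -/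

import Mathlib

open MeasureTheory Set Filter Topology

noncomputable section

/-- `f` is càdlàg on `[0,T]`: right-continuous on `[0,T)` and with left limits on
`(0,T]`. -/
def IsCadlagOn (f : ℝ → ℝ) (T : ℝ) : Prop :=
  (∀ t ∈ Ico (0:ℝ) T, Tendsto f (𝓝[≥] t) (𝓝 (f t))) ∧
  (∀ t ∈ Ioc (0:ℝ) T, ∃ L : ℝ, Tendsto f (𝓝[<] t) (𝓝 L))

/-- A Skorokhod time change on `[0,T]`: a strictly increasing continuous bijection of
`[0,T]` onto itself. -/
def IsTimeChange (T : ℝ) (γ : ℝ → ℝ) : Prop :=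
  ContinuousOn γ (Icc 0 T) ∧ StrictMonoOn γ (Icc 0 T) ∧ γ 0 = 0 ∧ γ T = T

/-- `A_f(t) = ∫₀^t 1{f(z) > a} dz`. -/
noncomputable def occUpper (a : ℝ) (f : ℝ → ℝ) (t : ℝ) : ℝ :=
  ∫ z in (0:ℝ)..t, ({z : ℝ | a < f z}.indicator (fun _ => (1:ℝ)) z)


/-!
Both occupation times are Lebesgue measures: `A_g(γ t) = λ({g > a} ∩ (0, γ t])` and
`A_f(t) = λ({f > a} ∩ (0, t])`, so their difference is at most the measure of the symmetric
difference of these two sets. A point of it lies between `t` and `γ t`, or it is a `z ≤ t` at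
which exactly one of `g z`, `f z` exceeds `a`. In the latter case either `g z` and `g (γ z)`
lie on different sides of `a`, or `g (γ z)` and `f z` do, and then
`|f z - a| ≤ |g (γ z) - f z| ≤ δ`.

Measurability of càdlàg paths, needed to read the integrals as measures, comes from right
continuity: `f` is the pointwise limit of `z ↦ f ((⌊n z⌋ + 1) / n)`.
-/

open scoped symmDiff

theorem tendsto_floor_mul_add_one_div_nhdsGE (z : ℝ) :
    Tendsto (fun n : ℕ => (⌊z * (n + 1)⌋ + 1 : ℝ) / (n + 1)) atTop (𝓝[≥] z) := by
  have hlt (n : ℕ) : z < (⌊z * (n + 1)⌋ + 1 : ℝ) / (n + 1) := by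
    rw [lt_div_iff₀ n.cast_add_one_pos]
    exact Int.lt_floor_add_one _
  have hle (n : ℕ) : (⌊z * (n + 1)⌋ + 1 : ℝ) / (n + 1) ≤ z + 1 / (n + 1) := by
    rw [div_le_iff₀ n.cast_add_one_pos, add_mul, one_div_mul_cancel n.cast_add_one_pos.ne']
    gcongr
    exact Int.floor_le _
  refine tendsto_nhdsWithin_iff.2 ⟨?_, .of_forall fun n => (hlt n).le⟩
  refine tendsto_of_tendsto_of_tendsto_of_le_of_le tendsto_const_nhds ?_ (fun n => (hlt n).le) hle
  simpa using tendsto_const_nhds.add (tendsto_one_div_add_atTop_nhds_zero_nat (𝕜 := ℝ))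

theorem aemeasurable_of_ae_continuousWithinAt_Ici {β : Type*} [TopologicalSpace β]
    [TopologicalSpace.PseudoMetrizableSpace β] [MeasurableSpace β] [BorelSpace β]
    {μ : Measure ℝ} {f : ℝ → β} (hf : ∀ᵐ x ∂μ, ContinuousWithinAt f (Ici x) x) :
    AEMeasurable f μ := by
  refine aemeasurable_of_tendsto_metrizable_ae'
    (f := fun (n : ℕ) (z : ℝ) => f ((⌊z * (n + 1)⌋ + 1 : ℝ) / (n + 1))) (fun n => ?_) ?_
  · exact ((measurable_of_countable fun k : ℤ => f ((k + 1 : ℝ) / (n + 1))).comp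
      (Int.measurable_floor.comp (measurable_mul_const _))).aemeasurable
  · filter_upwards [hf] with z hz
    exact hz.tendsto.comp (tendsto_floor_mul_add_one_div_nhdsGE z)

theorem IsCadlagOn.aemeasurable {f : ℝ → ℝ} {T : ℝ} (hf : IsCadlagOn f T) :
    AEMeasurable f (volume.restrict (Icc 0 T)) := by
  rw [← Measure.restrict_congr_set Ico_ae_eq_Icc]
  exact aemeasurable_of_ae_continuousWithinAt_Ici <|
    ae_restrict_of_forall_mem measurableSet_Ico hf.1

theorem occUpper_eq_measureReal_of_aemeasurable {a t : ℝ} {f : ℝ → ℝ} (ht : 0 ≤ t)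
    (hf : AEMeasurable f (volume.restrict (Ioc 0 t))) :
    occUpper a f t = volume.real ({z | a < f z} ∩ Ioc 0 t) := by
  rw [occUpper, intervalIntegral.integral_of_le ht,
    integral_indicator₀ (s := {z | a < f z}) (hf.nullMeasurable measurableSet_Ioi),
    setIntegral_const, measureReal_restrict_apply' measurableSet_Ioc, smul_eq_mul, mul_one]

theorem IsCadlagOn.occUpper_eq_measureReal {a T t : ℝ} {f : ℝ → ℝ} (hf : IsCadlagOn f T)
    (ht : t ∈ Icc 0 T) : occUpper a f t = volume.real ({z | a < f z} ∩ Ioc 0 t) :=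
  occUpper_eq_measureReal_of_aemeasurable ht.1 <| hf.aemeasurable.mono_measure <|
    Measure.restrict_mono (Ioc_subset_Icc_self.trans (Icc_subset_Icc_right ht.2)) le_rfl

theorem abs_measureReal_sub_le_measureReal_symmDiff_of_ne_top {α : Type*} [MeasurableSpace α]
    {μ : Measure α} {s t : Set α} (hs : μ s ≠ ⊤) (ht : μ t ≠ ⊤) :
    |μ.real s - μ.real t| ≤ μ.real (s ∆ t) := by
  have hle {s t : Set α} (hs : μ s ≠ ⊤) (ht : μ t ≠ ⊤) : μ.real s ≤ μ.real t + μ.real (s ∆ t) :=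
    calc μ.real s ≤ μ.real (t ∪ s ∆ t) :=
          measureReal_mono (fun x hx => by by_cases hxt : x ∈ t <;> simp_all [mem_symmDiff])
            (measure_union_ne_top ht (measure_symmDiff_ne_top hs ht))
      _ ≤ μ.real t + μ.real (s ∆ t) := measureReal_union_le _ _
  rw [abs_sub_le_iff]
  constructor
  · linarith [hle hs ht]
  · linarith [symmDiff_comm s t ▸ hle ht hs]

theorem Set.inter_symmDiff_inter_subset {α : Type*} (s s' t t' : Set α) :
    (s ∩ t) ∆ (s' ∩ t') ⊆ t ∆ t' ∪ s ∆ s' ∩ t' := by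
  intro x
  simp only [mem_symmDiff, mem_union, mem_inter_iff]
  tauto

theorem Set.Ioc_symmDiff_Ioc_subset_uIoc {α : Type*} [LinearOrder α] (a b c : α) :
    Ioc a b ∆ Ioc a c ⊆ uIoc b c := by
  intro x
  simp only [mem_symmDiff, mem_Ioc, mem_uIoc]
  grind

theorem abs_measureReal_inter_Ioc_sub_le (S S' : Set ℝ) (c t u : ℝ) :
    |volume.real (S ∩ Ioc c u) - volume.real (S' ∩ Ioc c t)| ≤
      |u - t| + volume.real (S ∆ S' ∩ Ioc c t) := by
  have hfin {s : Set ℝ} {a b : ℝ} : volume (s ∩ Ioc a b) ≠ ⊤ :=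
    measure_inter_ne_top_of_right_ne_top measure_Ioc_lt_top.ne
  calc _ ≤ volume.real ((S ∩ Ioc c u) ∆ (S' ∩ Ioc c t)) :=
        abs_measureReal_sub_le_measureReal_symmDiff_of_ne_top hfin hfin
    _ ≤ volume.real (uIoc u t ∪ S ∆ S' ∩ Ioc c t) :=
        measureReal_mono ((inter_symmDiff_inter_subset _ _ _ _).trans
            (union_subset_union_left _ (Ioc_symmDiff_Ioc_subset_uIoc _ _ _)))
          (measure_union_ne_top (Real.volume_uIoc ▸ ENNReal.ofReal_ne_top) hfin)
    _ ≤ volume.real (uIoc u t) + volume.real (S ∆ S' ∩ Ioc c t) := measureReal_union_le _ _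
    _ = |u - t| + volume.real (S ∆ S' ∩ Ioc c t) := by
        rw [measureReal_def, Real.volume_uIoc, ENNReal.toReal_ofReal (abs_nonneg _), abs_sub_comm]

theorem crossing_or_abs_sub_le_of_abs_sub_le {a x y w δ : ℝ} (hyw : |y - w| ≤ δ)
    (hxw : ¬(a < x ↔ a < w)) : (y ≤ a ∧ a < x ∨ x ≤ a ∧ a < y) ∨ |w - a| ≤ δ := by
  rw [abs_le] at hyw ⊢
  grind

theorem IsTimeChange.mapsTo {T : ℝ} {γ : ℝ → ℝ} (hγ : IsTimeChange T γ) :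
    MapsTo γ (Icc 0 T) (Icc 0 T) := by
  obtain ⟨-, hmono, h0, hT⟩ := hγ
  intro s hs
  have hT0 : (0 : ℝ) ≤ T := hs.1.trans hs.2
  exact ⟨h0 ▸ hmono.monotoneOn (left_mem_Icc.2 hT0) hs hs.1,
    hT ▸ hmono.monotoneOn hs (right_mem_Icc.2 hT0) hs.2⟩

theorem IsTimeChange.abs_sub_le_iSup {T t : ℝ} {γ : ℝ → ℝ} (hγ : IsTimeChange T γ)
    (ht : t ∈ Icc 0 T) : |γ t - t| ≤ ⨆ s : Icc (0:ℝ) T, |γ (s:ℝ) - (s:ℝ)| := by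
  refine le_ciSup (f := fun s : Icc (0:ℝ) T => |γ s - s|) ⟨T, ?_⟩ ⟨t, ht⟩
  rintro _ ⟨⟨s, hs⟩, rfl⟩
  have := hγ.mapsTo hs
  simp only [mem_Icc] at hs this
  exact abs_le.2 ⟨by linarith, by linarith⟩

theorem occUpper_time_delay_estimate_general (a T : ℝ) (f g γ : ℝ → ℝ)
    (hf : IsCadlagOn f T) (hg : IsCadlagOn g T) (hγ : IsTimeChange T γ)
    (δ : ℝ) (hδ : ∀ t ∈ Icc (0:ℝ) T, |g (γ t) - f t| ≤ δ) :
    ∀ t ∈ Icc (0:ℝ) T,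
      |occUpper a g (γ t) - occUpper a f t| ≤
        (⨆ s : Icc (0:ℝ) T, |γ (s:ℝ) - (s:ℝ)|)
        + (volume {z : ℝ | z ∈ Icc (0:ℝ) T ∧
            ((g (γ z) ≤ a ∧ a < g z) ∨ (g z ≤ a ∧ a < g (γ z)))}).toReal
        + (volume {z : ℝ | z ∈ Icc (0:ℝ) T ∧ |f z - a| ≤ δ}).toReal := by
  intro t ht
  set E₁ := {z : ℝ | z ∈ Icc (0:ℝ) T ∧ ((g (γ z) ≤ a ∧ a < g z) ∨ (g z ≤ a ∧ a < g (γ z)))}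
  set E₂ := {z : ℝ | z ∈ Icc (0:ℝ) T ∧ |f z - a| ≤ δ}
  have hIoc : Ioc 0 t ⊆ Icc 0 T := Ioc_subset_Icc_self.trans (Icc_subset_Icc_right ht.2)
  have hcover : {z | a < g z} ∆ {z | a < f z} ∩ Ioc 0 t ⊆ E₁ ∪ E₂ := by
    rintro z ⟨hz, hzt⟩
    have hzT := hIoc hzt
    refine (crossing_or_abs_sub_le_of_abs_sub_le (hδ z hzT) ?_).imp (⟨hzT, ·⟩) (⟨hzT, ·⟩)
    simp only [mem_symmDiff, mem_ofPred_eq] at hz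
    tauto
  have hE : volume (E₁ ∪ E₂) ≠ ⊤ :=
    measure_ne_top_of_subset (union_subset (fun _ h => h.1) (fun _ h => h.1)) measure_Icc_lt_top.ne
  rw [hg.occUpper_eq_measureReal (hγ.mapsTo ht), hf.occUpper_eq_measureReal ht, add_assoc]
  calc _ ≤ |γ t - t| + volume.real ({z | a < g z} ∆ {z | a < f z} ∩ Ioc 0 t) :=
        abs_measureReal_inter_Ioc_sub_le _ _ _ _ _
    _ ≤ _ := add_le_add (hγ.abs_sub_le_iSup ht)
        ((measureReal_mono hcover hE).trans (measureReal_union_le _ _))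

/-- the key time-delay estimate, Step (ii) of the proof of Theorem 3.11
/ `eq:keyestimate`. For `f, g ∈ D([0,T],ℝ)`, a Skorokhod time change `γ` of `[0,T]` and
any `δ ≥ sup_{t∈[0,T]} |g(γ(t)) − f(t)|`, for every `t ∈ [0,T]`:
`|A_g(γ(t)) − A_f(t)| ≤ sup_{s∈[0,T]} |γ(s)−s|`
`+ λ(z ∈ [0,T] : g(γ(z)) ≤ a < g(z) or g(z) ≤ a < g(γ(z)))`
`+ λ(z ∈ [0,T] : |f(z) − a| ≤ δ)`. -/
theorem occUpper_time_delay_estimate (a T : ℝ) (hT : 0 < T) (f g γ : ℝ → ℝ)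
    (hf : IsCadlagOn f T) (hg : IsCadlagOn g T) (hγ : IsTimeChange T γ)
    (δ : ℝ) (hδ : ∀ t ∈ Icc (0:ℝ) T, |g (γ t) - f t| ≤ δ) :
    ∀ t ∈ Icc (0:ℝ) T,
      |occUpper a g (γ t) - occUpper a f t| ≤
        (⨆ s : Icc (0:ℝ) T, |γ (s:ℝ) - (s:ℝ)|)
        + (volume {z : ℝ | z ∈ Icc (0:ℝ) T ∧
            ((g (γ z) ≤ a ∧ a < g z) ∨ (g z ≤ a ∧ a < g (γ z)))}).toReal
        + (volume {z : ℝ | z ∈ Icc (0:ℝ) T ∧ |f z - a| ≤ δ}).toReal :=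
  occUpper_time_delay_estimate_general a T f g γ hf hg hγ δ hδ
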